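/- Let 𝒜 = [[Φ, Ψ₁],[Ψ₂, -Θ]] be a generalized saddle-point matrix with Φ invertible and Schur complement S := Θ + Ψ₂ Φ⁻¹ Ψ₁ invertible, and let P_L = [[Φ, 0],[Ψ₂, -S]] be the block lower-triangular preconditioner. Then (𝒜 P_L⁻¹ - I)² = 0, i.e., the right-preconditioned matrix with the block lower-triangular preconditioner also has minimal polynomial dividing (X-1)². -/

import Mathlib

/-!
Writing `N = [[0, Φ⁻¹Ψ₁], [0, 0]]`, the block factorization `𝒜 = P_L (1 + N)` holds precisely
because `S` is the Schur complement. Hence `𝒜 P_L⁻¹ - 1 = P_L N P_L⁻¹`, whose square is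
`P_L N² P_L⁻¹ = 0`.
-/

open Matrix

namespace Matrix

variable {l m R : Type*} [Fintype l] [Fintype m] [DecidableEq l] [DecidableEq m] [CommRing R]

theorem fromBlocks_zero_zero_zero_sq (B : Matrix l m R) :
    fromBlocks (0 : Matrix l l R) B 0 (0 : Matrix m m R) ^ 2 = 0 := by
  simp [sq, fromBlocks_multiply, fromBlocks_zero]

theorem fromBlocks_eq_fromBlocks_zero₁₂_mul_one_add (A : Matrix l l R) (B : Matrix l m R)
    (C : Matrix m l R) (D : Matrix m m R) (hA : IsUnit A.det) :
    fromBlocks A B C D =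
      fromBlocks A 0 C (D - C * A⁻¹ * B) * (1 + fromBlocks 0 (A⁻¹ * B) 0 0) := by
  rw [← fromBlocks_one, fromBlocks_add, fromBlocks_multiply]
  simp [mul_nonsing_inv_cancel_left _ _ hA, Matrix.mul_assoc]

theorem mul_one_add_mul_nonsing_inv_sub_one_sq (P N : Matrix l l R) (hP : IsUnit P.det) :
    (P * (1 + N) * P⁻¹ - 1) ^ 2 = P * N ^ 2 * P⁻¹ := by
  have hconj : P * (1 + N) * P⁻¹ - 1 = P * N * P⁻¹ := by
    rw [Matrix.mul_add, Matrix.mul_one, Matrix.add_mul, mul_nonsing_inv _ hP, add_sub_cancel_left]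
  rw [hconj]
  simp only [sq, Matrix.mul_assoc, nonsing_inv_mul_cancel_left _ _ hP]

end Matrix

theorem saddle_point_lower_preconditioned_nilpotent_general
    (n m : ℕ)
    (Φ : Matrix (Fin n) (Fin n) ℝ) (Ψ₁ : Matrix (Fin n) (Fin m) ℝ)
    (Ψ₂ : Matrix (Fin m) (Fin n) ℝ) (Θ : Matrix (Fin m) (Fin m) ℝ)
    (hΦ : IsUnit Φ.det)
    (S : Matrix (Fin m) (Fin m) ℝ) (hS : S = Θ + Ψ₂ * Φ⁻¹ * Ψ₁)
    (hSinv : IsUnit S.det)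
    (𝒜 : Matrix (Fin n ⊕ Fin m) (Fin n ⊕ Fin m) ℝ)
    (h𝒜 : 𝒜 = Matrix.fromBlocks Φ Ψ₁ Ψ₂ (-Θ))
    (PL : Matrix (Fin n ⊕ Fin m) (Fin n ⊕ Fin m) ℝ)
    (hPL : PL = Matrix.fromBlocks Φ 0 Ψ₂ (-S)) :
    (𝒜 * PL⁻¹ - 1) ^ 2 = 0 := by
  have hPL_det : IsUnit PL.det := by
    rw [hPL, det_fromBlocks_zero₁₂, det_neg]
    exact hΦ.mul ((isUnit_neg_one.pow _).mul hSinv)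
  have hfactor : 𝒜 = PL * (1 + fromBlocks 0 (Φ⁻¹ * Ψ₁) 0 0) := by
    rw [h𝒜, hPL, hS, neg_add, ← sub_eq_add_neg]
    exact fromBlocks_eq_fromBlocks_zero₁₂_mul_one_add Φ Ψ₁ Ψ₂ (-Θ) hΦ
  rw [hfactor, mul_one_add_mul_nonsing_inv_sub_one_sq _ _ hPL_det,
    fromBlocks_zero_zero_zero_sq, Matrix.mul_zero, Matrix.zero_mul]

/-- For the generalized saddle-point matrix
`𝒜 = [[Φ, Ψ₁],[Ψ₂, -Θ]]` with `Φ` invertible and invertible Schur complement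
`S = Θ + Ψ₂ Φ⁻¹ Ψ₁`, and the block lower-triangular preconditioner
`P_L = [[Φ, 0],[Ψ₂, -S]]`, one has `(𝒜 P_L⁻¹ - I)² = 0`. -/
theorem saddle_point_lower_preconditioned_nilpotent
    (n m : ℕ) (hn : 0 < n) (hm : 0 < m)
    (Φ : Matrix (Fin n) (Fin n) ℝ) (Ψ₁ : Matrix (Fin n) (Fin m) ℝ)
    (Ψ₂ : Matrix (Fin m) (Fin n) ℝ) (Θ : Matrix (Fin m) (Fin m) ℝ)
    (hΦ : IsUnit Φ.det)
    (S : Matrix (Fin m) (Fin m) ℝ) (hS : S = Θ + Ψ₂ * Φ⁻¹ * Ψ₁)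
    (hSinv : IsUnit S.det)
    (𝒜 : Matrix (Fin n ⊕ Fin m) (Fin n ⊕ Fin m) ℝ)
    (h𝒜 : 𝒜 = Matrix.fromBlocks Φ Ψ₁ Ψ₂ (-Θ))
    (PL : Matrix (Fin n ⊕ Fin m) (Fin n ⊕ Fin m) ℝ)
    (hPL : PL = Matrix.fromBlocks Φ 0 Ψ₂ (-S)) :
    (𝒜 * PL⁻¹ - 1) ^ 2 = 0 :=
  saddle_point_lower_preconditioned_nilpotent_general n m Φ Ψ₁ Ψ₂ Θ hΦ S hS hSinv 𝒜 h𝒜 PL hPL
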